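/- Let G be a finite directed acyclic multigraph with source s, all other vertices untrusted, such that every non-source vertex has diversity exactly d, no parallel edges exist except possibly out of s, and some sink t has in-degree exactly d. Then the multicast capacity of the broadcast-transformed network equals the multicast capacity of the original network, both being d. Formally: min over sinks t of the minimum s,t-edge cut size in G equals min over sinks t of the maximum number of internally-disjoint s-to-t paths in G, and both equal d. -/

import Mathlib

/-!
Since no vertex other than `s` sends two edges to the same vertex, the in-degree of every
vertex equals its diversity, so every `v ≠ s` has in-degree `d`. In an acyclic graph every
`s,t`-cut `[S, S̄]` contains all in-edges of an `edgeRel`-minimal vertex outside `S`, hence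
has at least `d` edges; the cut `[V \ {t₀}, {t₀}]` consists of the `d` in-edges of `t₀`, and
edge-disjoint paths to `t₀` end in distinct in-edges of `t₀`, so there are at most `d` of them.

For the `d` internally-disjoint paths, split every `u ≠ s` into `u → u⁺` (the broadcast
transformation). The minimal-vertex argument still gives `d` edges in every cut of the split
graph: an in-edge `e` of the minimal vertex contributes either itself or the split edge of its
tail. The split graph is acyclic, so Menger's theorem for edges (augment a 0/1 flow along
residual paths until a cut is saturated, then decompose the flow into paths) yields `d`
edge-disjoint paths there. Forgetting the split edges turns them into internally-disjoint paths
of `G`, as every internal vertex `u` is crossed through its split edge `u → u⁺`.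
-/

/-- A directed multigraph on vertex type `V` with edge type `E`. -/
structure Multigraph (V E : Type) where
  tail : E → V
  head : E → V

namespace Multigraph

variable {V E : Type}

/-- A (directed) walk from `s` to `t`: a nonempty list of edges, consecutive
edges compatible, starting at `s` and ending at `t`. -/
structure Walk (G : Multigraph V E) (s t : V) where
  edges : List E
  ne : edges ≠ []
  first : G.tail (edges.head ne) = s
  last : G.head (edges.getLast ne) = t
  chain : edges.Chain' fun e f => G.head e = G.tail f

namespace Walk

variable {G : Multigraph V E} {s t : V}

/-- The internal vertices of a walk: heads of all edges except the last. -/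
def internals (w : G.Walk s t) : Set V :=
  {v | ∃ e ∈ w.edges.dropLast, G.head e = v}

/-- All vertices visited by a walk. -/
def vertexSet (w : G.Walk s t) : Set V :=
  {v | v = s ∨ ∃ e ∈ w.edges, G.head e = v}

/-- The set of edges used by a walk. -/
def edgeSet (w : G.Walk s t) : Set E := {e | e ∈ w.edges}

/-- A walk is simple (a path) if it visits no vertex twice. -/
def IsSimple (w : G.Walk s t) : Prop := (s :: w.edges.map G.head).Nodup

end Walk

/-- There exist `n` pairwise internally-disjoint paths from `s` to `t`
(in a multigraph, parallel direct edges count as distinct internally-disjoint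
paths, so pairwise edge-disjointness is also required). -/
def HasIntDisjoint (G : Multigraph V E) (s t : V) (n : ℕ) : Prop :=
  ∃ P : Fin n → G.Walk s t, ∀ i j, i ≠ j →
    (P i).internals ∩ (P j).internals = ∅ ∧ (P i).edgeSet ∩ (P j).edgeSet = ∅

/-- There exist `n` pairwise edge-disjoint walks from `s` to `t`. -/
def HasEdgeDisjoint (G : Multigraph V E) (s t : V) (n : ℕ) : Prop :=
  ∃ P : Fin n → G.Walk s t, ∀ i j, i ≠ j →
    (P i).edgeSet ∩ (P j).edgeSet = ∅

/-- `A ⊆ V \ {s,t}` is an `s,t`-vertex cut: removing `A` destroys all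
walks from `s` to `t`, i.e. every walk from `s` to `t` meets `A`. -/
def IsVertexCut (G : Multigraph V E) (s t : V) (A : Set V) : Prop :=
  s ∉ A ∧ t ∉ A ∧ ∀ w : G.Walk s t, ∃ v ∈ w.vertexSet, v ∈ A

/-- There is no edge from `s` to `t`. -/
def Nonadjacent (G : Multigraph V E) (s t : V) : Prop :=
  ∀ e : E, ¬(G.tail e = s ∧ G.head e = t)

/-- The edge cut `[S, S̄]`: all edges with tail in `S` and head outside `S`. -/
def cutE (G : Multigraph V E) [Fintype E] [DecidableEq V] (S : Finset V) : Finset E :=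
  Finset.univ.filter fun e => G.tail e ∈ S ∧ G.head e ∉ S

/-- `tail([S, S̄])`: the set of tails of the edges in the cut `[S, S̄]`. -/
def tailSet (G : Multigraph V E) [Fintype E] [DecidableEq V] (S : Finset V) : Finset V :=
  (G.cutE S).image G.tail

/-- The parents of a vertex `v`. -/
def parents (G : Multigraph V E) (v : V) : Set V :=
  {u | ∃ e : E, G.tail e = u ∧ G.head e = v}

/-- The in-degree of a vertex: number of edges entering it. -/
def indeg (G : Multigraph V E) [Fintype E] [DecidableEq V] (t : V) : ℕ :=
  (Finset.univ.filter fun e => G.head e = t).card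

/-- The diversity `d(v) = |Γ⁻(v) \ {s}| + |[s,v]|` of a vertex `v`
with respect to the source `s`. -/
def diversity (G : Multigraph V E) [Fintype V] [Fintype E] [DecidableEq V]
    (s v : V) : ℕ :=
  (Finset.univ.filter fun u => u ≠ s ∧ ∃ e : E, G.tail e = u ∧ G.head e = v).card +
  (Finset.univ.filter fun e : E => G.tail e = s ∧ G.head e = v).card

/-- A multigraph is acyclic if it has no closed walk. -/
def Acyclic (G : Multigraph V E) : Prop := ∀ v : V, IsEmpty (G.Walk v v)

/-- The broadcast transformation with source `s`: every vertex `u ≠ s` is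
split into `u → u⁺`, all edges into `u` are kept, and every edge out of
`u` is redirected to originate from `u⁺` (edges out of `s` are unchanged). -/
def broadcast (G : Multigraph V E) (s : V) [DecidableEq V] :
    Multigraph (V ⊕ {u : V // u ≠ s}) (E ⊕ {u : V // u ≠ s}) where
  tail := fun x => match x with
    | Sum.inl e => if h : G.tail e = s then Sum.inl s else Sum.inr ⟨G.tail e, h⟩
    | Sum.inr u => Sum.inl u.1
  head := fun x => match x with
    | Sum.inl e => Sum.inl (G.head e)
    | Sum.inr u => Sum.inr u

/-- `hw` is the walk in the broadcast transformation corresponding to `w`: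
the original edges appearing along `hw`, in order, are exactly those of `w`. -/
def Corresponds [DecidableEq V] {G : Multigraph V E} {s t : V} (w : G.Walk s t)
    (hw : (G.broadcast s).Walk (Sum.inl s) (Sum.inl t)) : Prop :=
  hw.edges.filterMap (Sum.elim some (fun _ => none)) = w.edges

/-- `v` is reachable from `s` by a walk avoiding the vertex set `A`
(in the graph `G − A`). -/
def ReachAvoid (G : Multigraph V E) (A : Set V) (s v : V) : Prop :=
  v = s ∨ ∃ w : G.Walk s v, ∀ x ∈ w.vertexSet, x ∉ A

end Multigraph

namespace Multigraph

variable {V E : Type} {G : Multigraph V E}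

def edgeRel (G : Multigraph V E) (u v : V) : Prop := ∃ e, G.tail e = u ∧ G.head e = v

namespace Walk

variable {a b v : V}

def support (w : G.Walk a b) : List V := a :: w.edges.map G.head

theorem isSimple_iff (w : G.Walk a b) : w.IsSimple ↔ w.support.Nodup := Iff.rfl

def single (e : E) (h : G.head e = b) : G.Walk (G.tail e) b :=
  ⟨[e], List.cons_ne_nil e [], rfl, h, List.isChain_singleton e⟩

def cons (e : E) (w : G.Walk v b) (h : G.head e = v) : G.Walk (G.tail e) b where
  edges := e :: w.edges
  ne := List.cons_ne_nil _ _
  first := rfl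
  last := by rw [List.getLast_cons w.ne]; exact w.last
  chain := by
    refine List.isChain_cons.mpr ⟨fun f hf => ?_, w.chain⟩
    rw [List.head?_eq_some_head w.ne, Option.mem_some_iff] at hf
    rw [h, ← hf, w.first]

@[simp] theorem edges_single (e : E) (h : G.head e = b) : (single e h).edges = [e] := rfl

@[simp] theorem edges_cons (e : E) (w : G.Walk v b) (h : G.head e = v) :
    (cons e w h).edges = e :: w.edges := rfl

theorem support_single (e : E) (h : G.head e = b) : (single e h).support = [G.tail e, b] := by
  simp [support, h]

theorem support_cons (e : E) (w : G.Walk v b) (h : G.head e = v) :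
    (cons e w h).support = G.tail e :: w.support := by
  simp [support, h]

theorem internals_single (e : E) (h : G.head e = b) : (single e h).internals = ∅ := by
  simp [internals]

theorem internals_cons (e : E) (w : G.Walk v b) (h : G.head e = v) :
    (cons e w h).internals = insert (G.head e) w.internals := by
  obtain ⟨f, l, hl⟩ := List.exists_cons_of_ne_nil w.ne
  ext x
  simp [internals, hl, eq_comm]

@[elab_as_elim]
theorem induction_on {motive : ∀ a, G.Walk a b → Prop} (w : G.Walk a b)
    (single : ∀ e (h : G.head e = b), motive _ (single e h))
    (cons : ∀ e {v} (w : G.Walk v b) (h : G.head e = v), motive v w → motive _ (cons e w h)) :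
    motive a w := by
  obtain ⟨l, hne, rfl, hlast, hchain⟩ := w
  induction l with
  | nil => exact absurd rfl hne
  | cons e r ih =>
    cases r with
    | nil => exact single e hlast
    | cons f r =>
      obtain ⟨hef, hchain⟩ := List.isChain_cons_cons.mp hchain
      exact cons e ⟨f :: r, List.cons_ne_nil f r, rfl, hlast, hchain⟩ hef
        (ih (List.cons_ne_nil f r) hlast hchain)

theorem map_tail_append (w : G.Walk a b) : w.edges.map G.tail ++ [b] = w.support := by
  induction w using induction_on with
  | single e h => simp [support_single]
  | cons e w h ih => simp [support_cons, ← ih]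

theorem transGen (w : G.Walk a b) : Relation.TransGen G.edgeRel a b := by
  induction w using induction_on with
  | single e h => exact .single ⟨e, rfl, h⟩
  | cons e w h ih => exact .head ⟨e, rfl, h⟩ ih

theorem reflTransGen_of_mem_support (w : G.Walk a b) (hv : v ∈ w.support) :
    Relation.ReflTransGen G.edgeRel a v := by
  induction w using induction_on with
  | single e h =>
    rw [support_single] at hv
    rcases List.mem_pair.mp hv with rfl | rfl
    exacts [.refl, .single ⟨e, rfl, h⟩]
  | cons e w h ih =>
    rcases List.mem_cons.mp (support_cons e w h ▸ hv) with rfl | hv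
    exacts [.refl, .head ⟨e, rfl, h⟩ (ih hv)]

theorem exists_support_sublist (w : G.Walk a b) (hv : v ∈ w.support) (hvb : v ≠ b) :
    ∃ w' : G.Walk v b, w'.support.Sublist w.support := by
  induction w using induction_on with
  | single e h =>
    rw [support_single] at hv
    rcases List.mem_pair.mp hv with rfl | rfl
    exacts [⟨single e h, .refl _⟩, absurd rfl hvb]
  | cons e w h ih =>
    rcases List.mem_cons.mp (support_cons e w h ▸ hv) with rfl | hv
    · exact ⟨cons e w h, .refl _⟩
    · obtain ⟨w', hw'⟩ := ih hv
      exact ⟨w', support_cons e w h ▸ hw'.cons _⟩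

theorem nonempty_of_transGen (h : Relation.TransGen G.edgeRel a b) : Nonempty (G.Walk a b) := by
  induction h using Relation.TransGen.head_induction_on with
  | single h => obtain ⟨e, rfl, he⟩ := h; exact ⟨single e he⟩
  | head h _ ih => obtain ⟨e, rfl, he⟩ := h; exact ⟨cons e ih.some he⟩

theorem IsSimple.start_not_mem_internals {w : G.Walk a b} (hw : w.IsSimple) :
    a ∉ w.internals := by
  rintro ⟨e, he, rfl⟩
  exact (List.nodup_cons.mp hw).1 (List.mem_map_of_mem (List.dropLast_subset _ he))

theorem exists_isSimple_of_reflTransGen (h : Relation.ReflTransGen G.edgeRel a b)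
    (hab : a ≠ b) : ∃ w : G.Walk a b, w.IsSimple := by
  induction h using Relation.ReflTransGen.head_induction_on with
  | refl => exact absurd rfl hab
  | head hac _ ih =>
    obtain ⟨e, rfl, rfl⟩ := hac
    by_cases hcb : G.head e = b
    · exact ⟨single e hcb, by simpa [isSimple_iff, support_single]⟩
    obtain ⟨w, hw⟩ := ih hcb
    by_cases hmem : G.tail e ∈ w.support
    · obtain ⟨w', hw'⟩ := w.exists_support_sublist hmem hab
      exact ⟨w', hw'.nodup hw⟩
    · exact ⟨cons e w rfl, by rw [isSimple_iff, support_cons]; exact List.nodup_cons.mpr ⟨hmem, hw⟩⟩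

end Walk

theorem acyclic_iff : G.Acyclic ↔ ∀ v, ¬ Relation.TransGen G.edgeRel v v :=
  forall_congr' fun _ => ⟨fun h hv => h.false (Walk.nonempty_of_transGen hv).some,
    fun h => ⟨fun w => h w.transGen⟩⟩

theorem acyclic_of_potential (φ : V → ℕ) (hφ : ∀ e, φ (G.tail e) < φ (G.head e)) :
    G.Acyclic := by
  refine acyclic_iff.mpr fun v hv => lt_irrefl (φ v) ?_
  have := hv.lift φ (r := G.edgeRel) (p := (· < ·)) (by rintro _ _ ⟨e, rfl, rfl⟩; exact hφ e)
  rwa [Relation.transGen_eq_self] at this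

theorem wellFounded_of_irrefl_transGen {α : Type*} [Finite α] {r : α → α → Prop}
    (h : ∀ a, ¬ Relation.TransGen r a a) : WellFounded r := by
  have : IsTrans α (Relation.TransGen r) := ⟨fun _ _ _ => .trans⟩
  have : Std.Irrefl (Relation.TransGen r) := ⟨h⟩
  exact Subrelation.wf (fun h => Relation.TransGen.single h)
    (Finite.wellFounded_of_trans_of_irrefl _)

namespace Acyclic

variable (hG : G.Acyclic)
include hG

theorem exists_potential [Finite V] : ∃ φ : V → ℕ, ∀ e, φ (G.tail e) < φ (G.head e) := by
  refine ⟨fun v => {u | Relation.ReflTransGen G.edgeRel u v}.ncard,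
    fun e => Set.ncard_lt_ncard ⟨fun u hu => hu.tail ⟨e, rfl, rfl⟩, fun hsub => ?_⟩
      (Set.toFinite _)⟩
  exact acyclic_iff.mp hG _ (.head' ⟨e, rfl, rfl⟩ (hsub Relation.ReflTransGen.refl))

theorem wellFounded [Finite V] : WellFounded G.edgeRel :=
  wellFounded_of_irrefl_transGen (acyclic_iff.mp hG)

theorem wellFounded_swap [Finite V] : WellFounded (Function.swap G.edgeRel) :=
  wellFounded_of_irrefl_transGen fun v hv => acyclic_iff.mp hG v (Relation.transGen_swap.mp hv)

theorem isSimple {a b : V} (w : G.Walk a b) : w.IsSimple := by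
  rw [Walk.isSimple_iff]
  induction w using Walk.induction_on with
  | single e h =>
    suffices G.tail e ≠ b by simpa [Walk.support_single]
    rintro rfl
    exact (hG _).false (Walk.single e h)
  | cons e w h ih =>
    rw [Walk.support_cons]
    refine List.nodup_cons.mpr ⟨fun hmem => ?_, ih⟩
    exact acyclic_iff.mp hG _ (.head' ⟨e, rfl, h⟩ (w.reflTransGen_of_mem_support hmem))

end Acyclic

section Flow

open scoped Finset symmDiff

variable [DecidableEq V] (X : Multigraph V E)

def netOut (F : Finset E) (v : V) : ℤ := #{e ∈ F | X.tail e = v} - #{e ∈ F | X.head e = v}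

/-- `F` is the set of edges carrying one unit of an integral `a`-`b` flow of value `k` with unit
capacities. -/
def IsFlow (a b : V) (F : Finset E) (k : ℤ) : Prop :=
  (∀ v, v ≠ a → v ≠ b → X.netOut F v = 0) ∧ X.netOut F a = k

variable {X} {a b : V}

theorem sum_netOut (F : Finset E) (S : Finset V) :
    ∑ v ∈ S, X.netOut F v =
      #{e ∈ F | X.tail e ∈ S ∧ X.head e ∉ S} - #{e ∈ F | X.head e ∈ S ∧ X.tail e ∉ S} := by
  simp only [netOut, Finset.sum_sub_distrib, Finset.card_filter, Nat.cast_sum, Nat.cast_ite,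
    Nat.cast_one, Nat.cast_zero]
  rw [Finset.sum_comm, Finset.sum_comm (s := S), ← Finset.sum_sub_distrib,
    ← Finset.sum_sub_distrib]
  refine Finset.sum_congr rfl fun e _ => ?_
  simp only [Finset.sum_ite_eq]
  split_ifs <;> simp_all

theorem Acyclic.exists_walk_of_netOut_nonneg [Finite V] (hX : X.Acyclic) {F : Finset E}
    (hF : ∀ v, v ≠ b → 0 ≤ X.netOut F v) {e : E} (he : e ∈ F) :
    ∃ w : X.Walk (X.tail e) b, ∀ f ∈ w.edges, f ∈ F := by
  induction e using (InvImage.wf X.tail hX.wellFounded_swap).induction with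
  | _ e ih =>
  by_cases hb : X.head e = b
  · exact ⟨.single e hb, by simpa⟩
  obtain ⟨f, hfF, hf⟩ : ∃ f ∈ F, X.tail f = X.head e := by
    have hin : 0 < #{f ∈ F | X.head f = X.head e} := Finset.card_pos.mpr ⟨e, by simp [he]⟩
    have hout : 0 < #{f ∈ F | X.tail f = X.head e} := by
      have := hF _ hb
      unfold netOut at this
      omega
    obtain ⟨f, hf⟩ := Finset.card_pos.mp hout
    exact ⟨f, Finset.mem_filter.mp hf⟩
  obtain ⟨w, hw⟩ := ih f ⟨e, rfl, hf.symm⟩ hfF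
  exact ⟨.cons e w hf.symm, by simpa [he] using hw⟩

variable [DecidableEq E]

def residual (X : Multigraph V E) (F : Finset E) : Multigraph V E where
  tail e := if e ∈ F then X.head e else X.tail e
  head e := if e ∈ F then X.tail e else X.head e

theorem netOut_union {F F' : Finset E} (h : Disjoint F F') (v : V) :
    X.netOut (F ∪ F') v = X.netOut F v + X.netOut F' v := by
  simp only [netOut, Finset.filter_union,
    Finset.card_union_of_disjoint (Finset.disjoint_filter_filter h)]
  push_cast
  ring

theorem netOut_sdiff {F W : Finset E} (h : W ⊆ F) (v : V) :
    X.netOut (F \ W) v = X.netOut F v - X.netOut W v := by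
  rw [eq_sub_iff_add_eq, ← netOut_union Finset.sdiff_disjoint, Finset.sdiff_union_of_subset h]

theorem netOut_residual_of_subset {F W : Finset E} (h : W ⊆ F) (v : V) :
    (X.residual F).netOut W v = -X.netOut W v := by
  have ht : {e ∈ W | (X.residual F).tail e = v} = {e ∈ W | X.head e = v} :=
    Finset.filter_congr fun e he => by simp [residual, h he]
  have hh : {e ∈ W | (X.residual F).head e = v} = {e ∈ W | X.tail e = v} :=
    Finset.filter_congr fun e he => by simp [residual, h he]
  rw [netOut, netOut, ht, hh, neg_sub]

theorem netOut_residual_of_disjoint {F W : Finset E} (h : Disjoint W F) (v : V) :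
    (X.residual F).netOut W v = X.netOut W v := by
  have ht : {e ∈ W | (X.residual F).tail e = v} = {e ∈ W | X.tail e = v} :=
    Finset.filter_congr fun e he => by simp [residual, Finset.disjoint_left.mp h he]
  have hh : {e ∈ W | (X.residual F).head e = v} = {e ∈ W | X.head e = v} :=
    Finset.filter_congr fun e he => by simp [residual, Finset.disjoint_left.mp h he]
  rw [netOut, netOut, ht, hh]

theorem netOut_symmDiff (F W : Finset E) (v : V) :
    X.netOut (F ∆ W) v = X.netOut F v + (X.residual F).netOut W v := by
  have hF : X.netOut F v = X.netOut (F \ W) v + X.netOut (F ∩ W) v := by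
    conv_lhs => rw [← Finset.sdiff_union_inter F W]
    exact netOut_union (Finset.disjoint_sdiff_inter F W) v
  have hW : (X.residual F).netOut W v = X.netOut (W \ F) v - X.netOut (F ∩ W) v := by
    rw [← netOut_residual_of_disjoint Finset.sdiff_disjoint,
      Finset.inter_comm, sub_eq_add_neg, ← netOut_residual_of_subset Finset.inter_subset_right,
      ← netOut_union (Finset.disjoint_sdiff_inter W F), Finset.sdiff_union_inter]
  rw [symmDiff_def, Finset.sup_eq_union, netOut_union disjoint_sdiff_sdiff, hF, hW]
  ring

theorem card_filter_toFinset_eq_count {l : List E} (hl : l.Nodup) (f : E → V) (v : V) :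
    #{e ∈ l.toFinset | f e = v} = (l.map f).count v := by
  rw [List.count, List.countP_map, List.countP_eq_length_filter,
    ← List.toFinset_card_of_nodup (hl.filter _), List.toFinset_filter]
  simp

theorem Walk.netOut_edges (w : X.Walk a b) (hw : w.edges.Nodup) (v : V) :
    X.netOut w.edges.toFinset v = (if a = v then 1 else 0) - (if b = v then 1 else 0) := by
  have h := congrArg (List.count v) w.map_tail_append
  simp only [support, List.count_append, List.count_cons, beq_iff_eq,
    List.count_nil] at h
  rw [netOut, card_filter_toFinset_eq_count hw, card_filter_toFinset_eq_count hw]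
  split_ifs at h ⊢ <;> omega

theorem Walk.IsSimple.isFlow {w : X.Walk a b} (hw : w.IsSimple) (hab : a ≠ b) :
    X.IsFlow a b w.edges.toFinset 1 := by
  have hnd : w.edges.Nodup := (List.nodup_cons.mp hw).2.of_map _
  refine ⟨fun v hva hvb => ?_, ?_⟩ <;> simp [w.netOut_edges hnd, *, Ne.symm]

theorem IsFlow.symmDiff {F : Finset E} {k : ℤ} (hF : X.IsFlow a b F k)
    {w : (X.residual F).Walk a b} (hw : w.IsSimple) (hab : a ≠ b) :
    X.IsFlow a b (F ∆ w.edges.toFinset) (k + 1) := by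
  obtain ⟨hwv, hwa⟩ := hw.isFlow hab
  exact ⟨fun v hva hvb => by rw [netOut_symmDiff, hF.1 v hva hvb, hwv v hva hvb, add_zero],
    by rw [netOut_symmDiff, hF.2, hwa]⟩

theorem IsFlow.sdiff {F W : Finset E} {k : ℤ} (hF : X.IsFlow a b F k) (hW : X.IsFlow a b W 1)
    (h : W ⊆ F) : X.IsFlow a b (F \ W) (k - 1) :=
  ⟨fun v hva hvb => by rw [netOut_sdiff h, hF.1 v hva hvb, hW.1 v hva hvb, sub_zero],
    by rw [netOut_sdiff h, hF.2, hW.2]⟩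

theorem IsFlow.exists_card_cutE_eq [Fintype V] [Fintype E] {F : Finset E} {k : ℤ}
    (hF : X.IsFlow a b F k) (hb : ¬ Relation.ReflTransGen (X.residual F).edgeRel a b) :
    ∃ S : Finset V, a ∈ S ∧ b ∉ S ∧ (#(X.cutE S) : ℤ) = k := by
  classical
  set S : Finset V := {v | Relation.ReflTransGen (X.residual F).edgeRel a v} with hS
  have hmem : ∀ v, v ∈ S ↔ Relation.ReflTransGen (X.residual F).edgeRel a v := by simp [hS]
  have hclosed : ∀ e, (X.residual F).tail e ∈ S → (X.residual F).head e ∈ S := fun e he =>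
    (hmem _).mpr (((hmem _).mp he).tail ⟨e, rfl, rfl⟩)
  have hcut : X.cutE S = {e ∈ F | X.tail e ∈ S ∧ X.head e ∉ S} := by
    ext e
    by_cases he : e ∈ F
    · simp [cutE, he]
    · simpa [cutE, he, residual] using hclosed e
  have hback : {e ∈ F | X.head e ∈ S ∧ X.tail e ∉ S} = ∅ :=
    Finset.filter_false_of_mem fun e he ⟨hh, ht⟩ =>
      ht (by simpa [residual, he] using hclosed e (by simpa [residual, he] using hh))
  have hsum : ∑ v ∈ S, X.netOut F v = k := by
    rw [Finset.sum_eq_single_of_mem a ((hmem a).mpr .refl) fun v hv hva =>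
      hF.1 v hva (by rintro rfl; exact hb ((hmem _).mp hv)), hF.2]
  refine ⟨S, (hmem a).mpr .refl, fun h => hb ((hmem b).mp h), ?_⟩
  rw [← hsum, sum_netOut, hcut, hback, Finset.card_empty, Nat.cast_zero, sub_zero]

theorem exists_isFlow_of_le_card_cutE [Fintype V] [Fintype E] (hab : a ≠ b) (k : ℕ)
    (hcut : ∀ S : Finset V, a ∈ S → b ∉ S → k ≤ #(X.cutE S)) : ∃ F, X.IsFlow a b F k := by
  induction k with
  | zero => exact ⟨∅, fun _ _ _ => by simp [netOut], by simp [netOut]⟩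
  | succ k ih =>
    obtain ⟨F, hF⟩ := ih fun S ha hb => (hcut S ha hb).trans' k.le_succ
    by_cases hreach : Relation.ReflTransGen (X.residual F).edgeRel a b
    · obtain ⟨w, hw⟩ := Walk.exists_isSimple_of_reflTransGen hreach hab
      exact ⟨_, by exact_mod_cast hF.symmDiff hw hab⟩
    · obtain ⟨S, ha, hb, hS⟩ := hF.exists_card_cutE_eq hreach
      have := hcut S ha hb
      omega

theorem Acyclic.exists_edgeDisjoint_of_isFlow [Finite V] (hX : X.Acyclic) (hab : a ≠ b)
    (k : ℕ) {F : Finset E} (hF : X.IsFlow a b F k) :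
    ∃ P : Fin k → X.Walk a b, (∀ i, ∀ e ∈ (P i).edges, e ∈ F) ∧
      ∀ i j, i ≠ j → (P i).edgeSet ∩ (P j).edgeSet = ∅ := by
  induction k generalizing F with
  | zero => exact ⟨Fin.elim0, fun i => i.elim0, fun i => i.elim0⟩
  | succ k ih =>
    obtain ⟨e, heF, rfl⟩ : ∃ e ∈ F, X.tail e = a := by
      have hout : 0 < #{e ∈ F | X.tail e = a} := by
        have := hF.2
        unfold netOut at this
        omega
      obtain ⟨e, he⟩ := Finset.card_pos.mp hout
      exact ⟨e, Finset.mem_filter.mp he⟩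
    have hnonneg : ∀ v, v ≠ b → 0 ≤ X.netOut F v := fun v hvb => by
      by_cases hva : v = X.tail e
      · rw [hva, hF.2]
        positivity
      · rw [hF.1 v hva hvb]
    obtain ⟨w, hwF⟩ := hX.exists_walk_of_netOut_nonneg hnonneg heF
    have hW : w.edges.toFinset ⊆ F := fun f hf => hwF f (List.mem_toFinset.mp hf)
    obtain ⟨P, hPF, hPdisj⟩ := ih (by simpa using hF.sdiff ((hX.isSimple w).isFlow hab) hW)
    have hdisj : ∀ i, w.edgeSet ∩ (P i).edgeSet = ∅ := fun i =>
      Set.eq_empty_of_forall_notMem fun f ⟨hfw, hfP⟩ =>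
        (Finset.mem_sdiff.mp (hPF i f hfP)).2 (List.mem_toFinset.mpr hfw)
    refine ⟨Fin.cons w P, Fin.cases hwF fun i f hf => (Finset.mem_sdiff.mp (hPF i f hf)).1, ?_⟩
    intro i j hij
    cases i using Fin.cases <;> cases j using Fin.cases
    · exact absurd rfl hij
    · simpa using hdisj _
    · simpa [Set.inter_comm] using hdisj _
    · simpa using hPdisj _ _ (by simpa using hij)

end Flow

open scoped Finset in
theorem Acyclic.hasEdgeDisjoint_of_le_card_cutE [Fintype V] [Fintype E] [DecidableEq V]
    {X : Multigraph V E} (hX : X.Acyclic) {a b : V} (hab : a ≠ b) (k : ℕ)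
    (hcut : ∀ S : Finset V, a ∈ S → b ∉ S → k ≤ #(X.cutE S)) : X.HasEdgeDisjoint a b k := by
  classical
  obtain ⟨F, hF⟩ := exists_isFlow_of_le_card_cutE hab k hcut
  obtain ⟨P, -, hP⟩ := hX.exists_edgeDisjoint_of_isFlow hab k hF
  exact ⟨P, hP⟩

section Degrees

open scoped Finset

variable {s t : V}

theorem HasIntDisjoint.hasEdgeDisjoint {n : ℕ} (h : G.HasIntDisjoint s t n) :
    G.HasEdgeDisjoint s t n :=
  let ⟨P, hP⟩ := h
  ⟨P, fun i j hij => (hP i j hij).2⟩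

variable [DecidableEq V]

theorem indeg_le_card_cutE [Fintype E] {S : Finset V} {v : V} (hv : v ∉ S)
    (hparents : ∀ e, G.head e = v → G.tail e ∈ S) : G.indeg v ≤ #(G.cutE S) :=
  Finset.card_le_card fun e he => by
    simp only [Finset.mem_filter, Finset.mem_univ, true_and] at he
    simp [cutE, he, hv, hparents e he]

theorem Acyclic.le_card_cutE [Finite V] [Fintype E] (hG : G.Acyclic) {d : ℕ}
    (hd : ∀ v, v ≠ s → d ≤ G.indeg v) {S : Finset V} (hs : s ∈ S) (ht : t ∉ S) :
    d ≤ #(G.cutE S) := by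
  obtain ⟨v, hv, hmin⟩ := hG.wellFounded.has_min {v | v ∉ S} ⟨t, ht⟩
  refine (hd v (by rintro rfl; exact hv hs)).trans (indeg_le_card_cutE hv fun e he => ?_)
  by_contra h
  exact hmin _ h ⟨e, rfl, he⟩

theorem Acyclic.card_cutE_erase [Fintype V] [Fintype E] (hG : G.Acyclic) (t : V) :
    #(G.cutE (Finset.univ.erase t)) = G.indeg t := by
  refine congrArg Finset.card (Finset.filter_congr fun e _ => ?_)
  simp only [Finset.mem_erase, Finset.mem_univ, and_true, ne_eq, not_not]
  exact ⟨And.right, fun h => ⟨fun ht => (hG _).false (.single e (h.trans ht.symm)), h⟩⟩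

theorem HasEdgeDisjoint.le_indeg [Fintype E] {n : ℕ} (h : G.HasEdgeDisjoint s t n) :
    n ≤ G.indeg t := by
  obtain ⟨P, hP⟩ := h
  have hinj : Function.Injective fun i => (P i).edges.getLast (P i).ne := fun i j hij => by
    by_contra hne
    refine Set.eq_empty_iff_forall_notMem.mp (hP i j hne) _ ⟨List.getLast_mem (P i).ne, ?_⟩
    change _ ∈ (P j).edges
    rw [show (P i).edges.getLast _ = (P j).edges.getLast _ from hij]
    exact List.getLast_mem _
  simpa [indeg] using Finset.card_le_card_of_injOn (s := Finset.univ) _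
    (fun i _ => by simp [(P i).last]) hinj.injOn

theorem indeg_eq_diversity [Fintype V] [Fintype E]
    (hpar : ∀ e e' : E, G.tail e ≠ s → G.tail e = G.tail e' → G.head e = G.head e' → e = e')
    (v : V) : G.indeg v = G.diversity s v := by
  classical
  have hparents : #({u | u ≠ s ∧ ∃ e : E, G.tail e = u ∧ G.head e = v} : Finset V) =
      #({e | G.head e = v ∧ G.tail e ≠ s} : Finset E) := by
    rw [← Finset.card_image_of_injOn (f := G.tail)]
    · congr 1
      ext u
      simp only [Finset.mem_image, Finset.mem_filter, Finset.mem_univ, true_and]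
      aesop
    · intro e he e' he' h
      simp only [Finset.coe_filter, Finset.mem_univ, true_and, Set.mem_ofPred_eq] at he he'
      exact hpar e e' he.2 h (he.1.trans he'.1.symm)
  rw [indeg, diversity, hparents, ← Finset.card_union_of_disjoint]
  · congr 1
    ext e
    simp only [Finset.mem_filter, Finset.mem_union, Finset.mem_univ, true_and]
    tauto
  · exact Finset.disjoint_filter.mpr fun e _ h h' => h.2 h'.1

end Degrees

section Broadcast

open scoped Finset

variable [DecidableEq V] {s : V}

@[simp] theorem broadcast_head_inl (e : E) :
    (G.broadcast s).head (.inl e) = .inl (G.head e) := rfl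

@[simp] theorem broadcast_head_inr (u : {u : V // u ≠ s}) :
    (G.broadcast s).head (.inr u) = .inr u := rfl

@[simp] theorem broadcast_tail_inr (u : {u : V // u ≠ s}) :
    (G.broadcast s).tail (.inr u) = .inl u.1 := rfl

theorem broadcast_tail_inl_of_eq {e : E} (h : G.tail e = s) :
    (G.broadcast s).tail (.inl e) = .inl s := dif_pos h

theorem broadcast_tail_inl_of_ne {e : E} (h : G.tail e ≠ s) :
    (G.broadcast s).tail (.inl e) = .inr ⟨G.tail e, h⟩ := dif_neg h

theorem elim_broadcast_tail_inl (e : E) :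
    Sum.elim id Subtype.val ((G.broadcast s).tail (.inl e)) = G.tail e := by
  by_cases h : G.tail e = s
  · rw [broadcast_tail_inl_of_eq h, Sum.elim_inl, id, h]
  · rw [broadcast_tail_inl_of_ne h, Sum.elim_inr]

theorem eq_inr_of_broadcast_tail_eq_inl {x : E ⊕ {u : V // u ≠ s}} {v : V} (hv : v ≠ s)
    (h : (G.broadcast s).tail x = .inl v) : x = .inr ⟨v, hv⟩ := by
  rcases x with e | u
  · by_cases he : G.tail e = s
    · rw [broadcast_tail_inl_of_eq he, Sum.inl.injEq] at h
      exact absurd h.symm hv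
    · rw [broadcast_tail_inl_of_ne he] at h
      exact absurd h Sum.inr_ne_inl
  · rw [broadcast_tail_inr, Sum.inl.injEq] at h
    subst h
    rfl

theorem Acyclic.broadcast [Finite V] (hG : G.Acyclic) : (G.broadcast s).Acyclic := by
  obtain ⟨φ, hφ⟩ := hG.exists_potential
  refine acyclic_of_potential (Sum.elim (fun v => 2 * φ v) fun u => 2 * φ u + 1) fun x => ?_
  rcases x with e | u
  · have := hφ e
    by_cases he : G.tail e = s
    · rw [he] at this
      simp only [broadcast_tail_inl_of_eq he, broadcast_head_inl, Sum.elim_inl]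
      omega
    · simp only [broadcast_tail_inl_of_ne he, broadcast_head_inl, Sum.elim_inl, Sum.elim_inr]
      omega
  · simp

theorem indeg_le_card_cutE_broadcast [Fintype V] [Fintype E]
    (hpar : ∀ e e' : E, G.tail e ≠ s → G.tail e = G.tail e' → G.head e = G.head e' → e = e')
    {S : Finset (V ⊕ {u : V // u ≠ s})} (hs : .inl s ∈ S) {v : V} (hv : .inl v ∉ S)
    (hparents : ∀ e, G.head e = v → G.tail e ≠ s → .inl (G.tail e) ∈ S) :
    G.indeg v ≤ #((G.broadcast s).cutE S) := by
  have hne : ∀ e, (G.broadcast s).tail (.inl e) ∉ S → G.tail e ≠ s := fun e he h =>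
    he (by rwa [broadcast_tail_inl_of_eq h])
  -- an in-edge of `v` leaving a split copy `u⁺ ∉ S` is replaced by the split edge `u → u⁺`
  let f : E → E ⊕ {u : V // u ≠ s} := fun e =>
    if he : (G.broadcast s).tail (.inl e) ∈ S then .inl e else .inr ⟨G.tail e, hne e he⟩
  refine Finset.card_le_card_of_injOn f (fun e he => ?_) (fun e he e' he' hee' => ?_)
  · simp only [Finset.coe_filter, Finset.mem_univ, true_and, Set.mem_ofPred_eq] at he
    by_cases hS : (G.broadcast s).tail (.inl e) ∈ S
    · simp [f, hS, cutE, he, hv]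
    · have hes := hne e hS
      simp only [f, dif_neg hS]
      rw [broadcast_tail_inl_of_ne hes] at hS
      simp [cutE, hS, hparents e he hes]
  · simp only [Finset.coe_filter, Finset.mem_univ, true_and, Set.mem_ofPred_eq] at he he'
    simp only [f] at hee'
    split_ifs at hee' with h h'
    · exact Sum.inl.inj hee'
    · exact hpar e e' (hne e h) (congrArg Subtype.val (Sum.inr.inj hee')) (he.trans he'.symm)

theorem Acyclic.le_card_cutE_broadcast [Fintype V] [Fintype E] (hG : G.Acyclic)
    (hpar : ∀ e e' : E, G.tail e ≠ s → G.tail e = G.tail e' → G.head e = G.head e' → e = e')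
    {d : ℕ} (hd : ∀ v, v ≠ s → d ≤ G.indeg v) {t : V} (hts : t ≠ s)
    {S : Finset (V ⊕ {u : V // u ≠ s})} (hs : .inl s ∈ S) (ht : .inl t ∉ S) :
    d ≤ #((G.broadcast s).cutE S) := by
  obtain ⟨v, ⟨hvs, hv⟩, hmin⟩ := hG.wellFounded.has_min {v | v ≠ s ∧ .inl v ∉ S} ⟨t, hts, ht⟩
  refine (hd v hvs).trans (indeg_le_card_cutE_broadcast hpar hs hv fun e he hes => ?_)
  by_contra h
  exact hmin _ ⟨hes, h⟩ ⟨e, rfl, he⟩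

/-- `Sum.elim id Subtype.val` sends both copies `u` and `u⁺` of a vertex to `u`. -/
theorem exists_walk_of_broadcast_walk {x : V ⊕ {u : V // u ≠ s}} {t : V}
    (w : (G.broadcast s).Walk x (.inl t)) :
    ∃ w' : G.Walk (Sum.elim id Subtype.val x) t, w'.edges = w.edges.filterMap Sum.getLeft? ∧
      ∀ v ∈ w'.internals, ∀ hv : v ≠ s, .inr ⟨v, hv⟩ ∈ w.edges := by
  induction w using Walk.induction_on with
  | single y h =>
    rcases y with e | u
    · rw [elim_broadcast_tail_inl]
      exact ⟨.single e (Sum.inl.inj h), rfl, by simp [Walk.internals_single]⟩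
    · exact absurd h Sum.inr_ne_inl
  | cons y w h ih =>
    obtain ⟨w', hedges, hint⟩ := ih
    subst h
    rcases y with e | u
    · have hstart : G.head e = Sum.elim id Subtype.val ((G.broadcast s).head (.inl e)) := rfl
      rw [elim_broadcast_tail_inl]
      refine ⟨.cons e w' hstart, by rw [Walk.edges_cons, Walk.edges_cons, hedges]; rfl, ?_⟩
      rw [Walk.internals_cons]
      rintro v (rfl | hv) hvs
      · have hfirst := eq_inr_of_broadcast_tail_eq_inl hvs w.first
        exact List.mem_cons_of_mem _ (hfirst ▸ List.head_mem w.ne)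
      · exact List.mem_cons_of_mem _ (hint v hv hvs)
    · exact ⟨w', by rw [hedges, Walk.edges_cons]; rfl,
        fun v hv hvs => List.mem_cons_of_mem _ (hint v hv hvs)⟩

theorem Acyclic.hasIntDisjoint_of_broadcast (hG : G.Acyclic) {t : V} {k : ℕ}
    (h : (G.broadcast s).HasEdgeDisjoint (.inl s) (.inl t) k) : G.HasIntDisjoint s t k := by
  obtain ⟨P, hP⟩ := h
  choose Q hQedges hQint using fun i => exists_walk_of_broadcast_walk (P i)
  refine ⟨Q, fun i j hij => ⟨Set.eq_empty_of_forall_notMem fun v ⟨hvi, hvj⟩ => ?_,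
    Set.eq_empty_of_forall_notMem fun e ⟨hei, hej⟩ => ?_⟩⟩
  · have hvs : v ≠ s := by
      rintro rfl
      exact (hG.isSimple (Q i)).start_not_mem_internals hvi
    exact Set.eq_empty_iff_forall_notMem.mp (hP i j hij) _ ⟨hQint i v hvi hvs, hQint j v hvj hvs⟩
  · have hmem : ∀ i, e ∈ (Q i).edges → .inl e ∈ (P i).edges := fun i he => by
      simpa [hQedges] using he
    exact Set.eq_empty_iff_forall_notMem.mp (hP i j hij) _ ⟨hmem i hei, hmem j hej⟩

end Broadcast

end Multigraph

theorem stmt14_general {V E : Type} [Fintype V] [Fintype E] [DecidableEq V]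
    (G : Multigraph V E) (s : V) (hacyc : G.Acyclic) (d : ℕ)
    (T : Finset V) (hTs : ∀ t ∈ T, t ≠ s)
    (hdiv : ∀ v : V, v ≠ s → G.diversity s v = d)
    (hpar : ∀ e e' : E, G.tail e ≠ s → G.tail e = G.tail e' →
      G.head e = G.head e' → e = e')
    (t₀ : V) (ht₀ : t₀ ∈ T) (hdeg : G.indeg t₀ = d) :
    ((∀ t ∈ T, ∀ S : Finset V, s ∈ S → t ∉ S → d ≤ (G.cutE S).card) ∧
      (∃ t ∈ T, ∃ S : Finset V, s ∈ S ∧ t ∉ S ∧ (G.cutE S).card = d)) ∧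
    ((∀ t ∈ T, G.HasIntDisjoint s t d) ∧
      (∃ t ∈ T, ∀ n, G.HasIntDisjoint s t n → n ≤ d)) := by
  have hindeg : ∀ v, v ≠ s → d ≤ G.indeg v := fun v hv =>
    (Multigraph.indeg_eq_diversity hpar v).trans (hdiv v hv) |>.ge
  refine ⟨⟨fun t _ S hs ht => hacyc.le_card_cutE hindeg hs ht, ?_⟩,
    fun t ht => ?_, ⟨t₀, ht₀, fun n hn => hdeg ▸ hn.hasEdgeDisjoint.le_indeg⟩⟩
  · refine ⟨t₀, ht₀, Finset.univ.erase t₀, ?_, Finset.notMem_erase t₀ _, ?_⟩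
    · exact Finset.mem_erase.mpr ⟨(hTs t₀ ht₀).symm, Finset.mem_univ s⟩
    · rw [hacyc.card_cutE_erase, hdeg]
  · have hts : (Sum.inl s : V ⊕ {u : V // u ≠ s}) ≠ .inl t := by simpa using (hTs t ht).symm
    exact hacyc.hasIntDisjoint_of_broadcast <| hacyc.broadcast.hasEdgeDisjoint_of_le_card_cutE
      hts d fun S hs ht' => hacyc.le_card_cutE_broadcast hpar hindeg (hTs t ht) hs ht'

/-- For an acyclic network with sink set `T` in which every
non-source vertex has diversity exactly `d`, with no parallel edges except
possibly out of `s`, and some sink of in-degree exactly `d`, the multicast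
capacity `min_{t ∈ T} K(s,t)` and the broadcast-transformed capacity
`min_{t ∈ T} λ(s,t)` both equal `d`. -/
theorem stmt14 {V E : Type} [Fintype V] [Fintype E] [DecidableEq V]
    (G : Multigraph V E) (s : V) (hacyc : G.Acyclic) (d : ℕ)
    (T : Finset V) (hT : T.Nonempty) (hTs : ∀ t ∈ T, t ≠ s)
    (hdiv : ∀ v : V, v ≠ s → G.diversity s v = d)
    (hpar : ∀ e e' : E, G.tail e ≠ s → G.tail e = G.tail e' →
      G.head e = G.head e' → e = e')
    (t₀ : V) (ht₀ : t₀ ∈ T) (hdeg : G.indeg t₀ = d) :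
    ((∀ t ∈ T, ∀ S : Finset V, s ∈ S → t ∉ S → d ≤ (G.cutE S).card) ∧
      (∃ t ∈ T, ∃ S : Finset V, s ∈ S ∧ t ∉ S ∧ (G.cutE S).card = d)) ∧
    ((∀ t ∈ T, G.HasIntDisjoint s t d) ∧
      (∃ t ∈ T, ∀ n, G.HasIntDisjoint s t n → n ≤ d)) :=
  stmt14_general G s hacyc d T hTs hdiv hpar t₀ ht₀ hdeg
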